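/- arXiv:2412.08997 — 4 statements merged into one kernel-verified Lean document; each statement's English description precedes it below -/
import Mathlib

section
/- Let n be a positive integer divisible by 2, write n = 2m, and let i, j be integers with 1 ≤ i, j < m/2 and i ≠ j. Then the subsets S = {0, i, i+j, m+i-j, m} and T = {0, m+i, i+j, m+i-j, m} of Z_n are homometric, i.e., they have the same multiset of pairwise cyclic distances. (This is the Type A family.) -/
/-- The cyclic (Lee) distance on `ZMod n`: `d(a,b) = min(|a-b|, n-|a-b|)`. -/
def cycDist (n : ℕ) (a b : ZMod n) : ℕ := min (a - b).val (b - a).val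

/-- The multiset of pairwise cyclic distances of a finite subset of `ZMod n`,
taken over unordered pairs of distinct elements. -/
def distMultiset (n : ℕ) (S : Finset (ZMod n)) : Multiset ℕ :=
  (S.sym2.filter (fun p => ¬ p.IsDiag)).val.map
    (Sym2.lift ⟨fun a b => cycDist n a b, fun a b => by
      simp only [cycDist]; exact min_comm _ _⟩)

/-- Two subsets of `ZMod n` are homometric if they have the same multiset of
pairwise cyclic distances. -/
def Homometric (n : ℕ) (S T : Finset (ZMod n)) : Prop :=
  distMultiset n S = distMultiset n T

lemma cycDist_comm (n : ℕ) (a b : ZMod n) : cycDist n a b = cycDist n b a := min_comm _ _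

lemma natCast_inj_lt {n a b : ℕ} (ha : a < n) (hb : b < n) (h : (a : ZMod n) = b) : a = b := by
  haveI : NeZero n := ⟨by omega⟩
  have := congrArg ZMod.val h
  rwa [ZMod.val_cast_of_lt ha, ZMod.val_cast_of_lt hb] at this

lemma ne_coe {n a b : ℕ} (ha : a < n) (hb : b < n) (h : a ≠ b) :
    (a : ZMod n) ≠ (b : ZMod n) := fun he => h (natCast_inj_lt ha hb he)

lemma cycDist_coe {n a b : ℕ} (h : a ≤ b) (hb : b < n) :
    cycDist n a b = min (b - a) (n - (b - a)) := by
  haveI : NeZero n := ⟨by omega⟩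
  have h1 : (b : ZMod n) - a = ((b - a : ℕ) : ZMod n) := by
    rw [Nat.cast_sub h]
  have h2 : ((b - a : ℕ) : ZMod n).val = b - a := ZMod.val_cast_of_lt (by omega)
  rcases eq_or_lt_of_le h with rfl | hlt
  · simp [cycDist]
  · have h3 : (a : ZMod n) - b = -(((b - a : ℕ) : ZMod n)) := by
      rw [← h1]; ring
    have hne : ((b - a : ℕ) : ZMod n) ≠ 0 := by
      intro hz
      have := natCast_inj_lt (by omega : b - a < n) (by omega : 0 < n) (by simpa using hz)
      omega
    rw [cycDist, h1, h3, ZMod.neg_val, if_neg hne, h2, min_comm]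

lemma msym2_singleton {α : Type*} (e : α) : ({e} : Multiset α).sym2 = {s(e,e)} := by
  rw [show ({e} : Multiset α) = e ::ₘ 0 from rfl, Multiset.sym2_cons]; simp

lemma quint (n : ℕ) (a b c d e : ZMod n) (hab : a ≠ b) (hac : a ≠ c) (had : a ≠ d)
    (hae : a ≠ e) (hbc : b ≠ c) (hbd : b ≠ d) (hbe : b ≠ e) (hcd : c ≠ d)
    (hce : c ≠ e) (hde : d ≠ e) :
    distMultiset n {a, b, c, d, e} =
      {cycDist n d e, cycDist n c d, cycDist n c e,
       cycDist n b c, cycDist n b d, cycDist n b e,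
       cycDist n a b, cycDist n a c, cycDist n a d, cycDist n a e} := by
  have hval : ({a, b, c, d, e} : Finset (ZMod n)).val = (a ::ₘ b ::ₘ c ::ₘ d ::ₘ {e}) := by
    simp [Finset.insert_val_of_notMem, hab, hac, had, hae, hbc, hbd, hbe, hcd, hce, hde]
  have key : (({a,b,c,d,e} : Finset (ZMod n)).sym2.filter (fun p => ¬ p.IsDiag)).val
      = Multiset.filter (fun p => ¬ p.IsDiag) ((a ::ₘ b ::ₘ c ::ₘ d ::ₘ {e}).sym2) := by
    rw [Finset.filter_val]
    congr 1
    show ({a,b,c,d,e} : Finset (ZMod n)).val.sym2 = _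
    rw [hval]
  rw [distMultiset, key]
  simp [Multiset.sym2_cons, Multiset.filter_cons, Sym2.mk_isDiag_iff, msym2_singleton,
    hab, hac, had, hae, hbc, hbd, hbe, hcd, hce, hde, Multiset.filter_add,
    Multiset.filter_singleton]

theorem typeA_homometric (m i j : ℕ) (hi1 : 1 ≤ i) (hi2 : 2 * i < m)
    (hj1 : 1 ≤ j) (hj2 : 2 * j < m) (hij : i ≠ j) :
    Homometric (2 * m)
      ({0, (i : ZMod (2 * m)), (i : ZMod (2 * m)) + j,
        (m : ZMod (2 * m)) + i - j, (m : ZMod (2 * m))} : Finset (ZMod (2 * m)))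
      ({0, (m : ZMod (2 * m)) + i, (i : ZMod (2 * m)) + j,
        (m : ZMod (2 * m)) + i - j, (m : ZMod (2 * m))} : Finset (ZMod (2 * m))) := by
  set n := 2 * m with hn
  have e0 : (0 : ZMod n) = ((0 : ℕ) : ZMod n) := by simp
  have e2 : (i : ZMod n) + j = ((i + j : ℕ) : ZMod n) := by push_cast; ring
  have e3 : (m : ZMod n) + i - j = ((m - j + i : ℕ) : ZMod n) := by
    push_cast [Nat.cast_sub (show j ≤ m by omega)]; ring
  have eb : (m : ZMod n) + i = ((m + i : ℕ) : ZMod n) := by push_cast; ring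
  rw [Homometric, e3, e0, e2, eb]
  rw [quint n ((0:ℕ) : ZMod n) ((i:ℕ) : ZMod n) ((i+j : ℕ) : ZMod n)
        ((m - j + i : ℕ) : ZMod n) ((m:ℕ) : ZMod n)
      (ne_coe (by omega) (by omega) (by omega)) (ne_coe (by omega) (by omega) (by omega))
      (ne_coe (by omega) (by omega) (by omega)) (ne_coe (by omega) (by omega) (by omega))
      (ne_coe (by omega) (by omega) (by omega)) (ne_coe (by omega) (by omega) (by omega))
      (ne_coe (by omega) (by omega) (by omega)) (ne_coe (by omega) (by omega) (by omega))
      (ne_coe (by omega) (by omega) (by omega)) (ne_coe (by omega) (by omega) (by omega)),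
     quint n ((0:ℕ) : ZMod n) ((m+i:ℕ) : ZMod n) ((i+j : ℕ) : ZMod n)
        ((m - j + i : ℕ) : ZMod n) ((m:ℕ) : ZMod n)
      (ne_coe (by omega) (by omega) (by omega)) (ne_coe (by omega) (by omega) (by omega))
      (ne_coe (by omega) (by omega) (by omega)) (ne_coe (by omega) (by omega) (by omega))
      (ne_coe (by omega) (by omega) (by omega)) (ne_coe (by omega) (by omega) (by omega))
      (ne_coe (by omega) (by omega) (by omega)) (ne_coe (by omega) (by omega) (by omega))
      (ne_coe (by omega) (by omega) (by omega)) (ne_coe (by omega) (by omega) (by omega))]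
  have s1 : cycDist n ((i:ℕ) : ZMod n) ((i+j:ℕ) : ZMod n) = j := by
    rw [cycDist_coe (by omega) (by omega)]; omega
  have s2 : cycDist n ((i:ℕ) : ZMod n) ((m-j+i:ℕ) : ZMod n) = m - j := by
    rw [cycDist_coe (by omega) (by omega)]; omega
  have s3 : cycDist n ((i:ℕ) : ZMod n) ((m:ℕ) : ZMod n) = m - i := by
    rw [cycDist_coe (by omega) (by omega)]; omega
  have s4 : cycDist n ((0:ℕ) : ZMod n) ((i:ℕ) : ZMod n) = i := by
    rw [cycDist_coe (by omega) (by omega)]; omega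
  have t1 : cycDist n ((m+i:ℕ) : ZMod n) ((i+j:ℕ) : ZMod n) = m - j := by
    rw [cycDist_comm, cycDist_coe (by omega) (by omega)]; omega
  have t2 : cycDist n ((m+i:ℕ) : ZMod n) ((m-j+i:ℕ) : ZMod n) = j := by
    rw [cycDist_comm, cycDist_coe (by omega) (by omega)]; omega
  have t3 : cycDist n ((m+i:ℕ) : ZMod n) ((m:ℕ) : ZMod n) = i := by
    rw [cycDist_comm, cycDist_coe (by omega) (by omega)]; omega
  have t4 : cycDist n ((0:ℕ) : ZMod n) ((m+i:ℕ) : ZMod n) = m - i := by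
    rw [cycDist_coe (by omega) (by omega)]; omega
  rw [s1, s2, s3, s4, t1, t2, t3, t4]
  simp only [Multiset.insert_eq_cons, ← Multiset.singleton_add]
  ac_rfl
end

section
/- Let n = 5m for a positive integer m, and let i be an integer with 1 ≤ i ≤ 5m/2 and i not in {m/2, m, 3m/2, 2m}. Then the subsets S = {0, i, m, 2m, 2m+i} and T = {0, i, m, m+i, 3m} of Z_n are homometric 5-element subsets. (This is the Type B family.) -/
lemma cycDist_congr {n : ℕ} {a b c d : ZMod n} (h : a - b = c - d) :
    cycDist n a b = cycDist n c d := by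
  unfold cycDist
  rw [h, show b - a = d - c by rw [← neg_sub a b, h, neg_sub]]

lemma cycDist_congr' {n : ℕ} {a b c d : ZMod n} (h : a - b = d - c) :
    cycDist n a b = cycDist n c d := by
  unfold cycDist
  rw [h, show b - a = c - d by rw [← neg_sub a b, h, neg_sub]]
  exact min_comm _ _

lemma card5 {n : ℕ} (a b c d e : ZMod n)
    (hab : a ≠ b) (hac : a ≠ c) (had : a ≠ d) (hae : a ≠ e)
    (hbc : b ≠ c) (hbd : b ≠ d) (hbe : b ≠ e)
    (hcd : c ≠ d) (hce : c ≠ e) (hde : d ≠ e) :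
    ({a, b, c, d, e} : Finset (ZMod n)).card = 5 := by
  rw [Finset.card_insert_of_notMem (by simp_all), Finset.card_insert_of_notMem (by simp_all),
      Finset.card_insert_of_notMem (by simp_all), Finset.card_insert_of_notMem (by simp_all),
      Finset.card_singleton]

lemma distM (n : ℕ) (a b c d e : ZMod n)
    (hab : a ≠ b) (hac : a ≠ c) (had : a ≠ d) (hae : a ≠ e)
    (hbc : b ≠ c) (hbd : b ≠ d) (hbe : b ≠ e)
    (hcd : c ≠ d) (hce : c ≠ e) (hde : d ≠ e) :
    distMultiset n {a, b, c, d, e} =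
      {cycDist n a b, cycDist n a c, cycDist n a d, cycDist n a e,
       cycDist n b c, cycDist n b d, cycDist n b e,
       cycDist n c d, cycDist n c e, cycDist n d e} := by
  have hval : ({a,b,c,d,e} : Finset (ZMod n)).val = ↑[a,b,c,d,e] := by
    simp only [Finset.insert_val]
    rw [Multiset.ndinsert_of_notMem, Multiset.ndinsert_of_notMem,
        Multiset.ndinsert_of_notMem, Multiset.ndinsert_of_notMem] <;>
      simp_all
    rfl
  unfold distMultiset
  rw [Finset.filter_val, Finset.sym2_val, hval]
  simp [List.sym2, Multiset.filter_cons, hab, hac, had, hae, hbc, hbd, hbe, hcd, hce, hde]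
  rfl

lemma perm10 (x1 x2 x3 x4 x5 x6 x7 x8 x9 x10 : ℕ) :
    ({x1, x2, x9, x3, x5, x8, x4, x10, x7, x6} : Multiset ℕ) =
    ({x1, x2, x3, x4, x5, x6, x7, x8, x9, x10} : Multiset ℕ) := by
  simp only [Multiset.insert_eq_cons, ← Multiset.singleton_add]
  ac_rfl

theorem typeB_homometric (m i : ℕ) (hi1 : 1 ≤ i) (hi2 : 2 * i ≤ 5 * m)
    (h1 : 2 * i ≠ m) (h2 : i ≠ m) (h3 : 2 * i ≠ 3 * m) (h4 : i ≠ 2 * m) :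
    ({0, (i : ZMod (5 * m)), (m : ZMod (5 * m)), ((2 * m : ℕ) : ZMod (5 * m)),
        ((2 * m : ℕ) : ZMod (5 * m)) + (i : ZMod (5 * m))} : Finset (ZMod (5 * m))).card = 5 ∧
    ({0, (i : ZMod (5 * m)), (m : ZMod (5 * m)), (m : ZMod (5 * m)) + i,
        ((3 * m : ℕ) : ZMod (5 * m))} : Finset (ZMod (5 * m))).card = 5 ∧
    Homometric (5 * m)
      ({0, (i : ZMod (5 * m)), (m : ZMod (5 * m)), ((2 * m : ℕ) : ZMod (5 * m)),
        ((2 * m : ℕ) : ZMod (5 * m)) + (i : ZMod (5 * m))} : Finset (ZMod (5 * m)))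
      ({0, (i : ZMod (5 * m)), (m : ZMod (5 * m)), (m : ZMod (5 * m)) + i,
        ((3 * m : ℕ) : ZMod (5 * m))} : Finset (ZMod (5 * m))) := by
  have hm : 1 ≤ m := by omega
  have hne : ∀ x y : ℕ, x < 5 * m → y < 5 * m → x ≠ y →
      (x : ZMod (5 * m)) ≠ (y : ZMod (5 * m)) := by
    intro x y hx hy hxy h
    exact hxy (by rw [← ZMod.val_cast_of_lt hx, ← ZMod.val_cast_of_lt hy, h])
  have hz : (0 : ZMod (5 * m)) = ((0 : ℕ) : ZMod (5 * m)) := by norm_cast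
  have hS5 : ((2 * m : ℕ) : ZMod (5 * m)) + (i : ZMod (5 * m)) = ((2 * m + i : ℕ) : ZMod (5 * m)) := by
    push_cast; ring
  have hT4 : (m : ZMod (5 * m)) + (i : ZMod (5 * m)) = ((m + i : ℕ) : ZMod (5 * m)) := by
    push_cast; ring
  have h5 : ((5 * m : ℕ) : ZMod (5 * m)) = 0 := ZMod.natCast_self _
  push_cast at h5
  rw [hz, hS5, hT4]
  refine ⟨card5 _ _ _ _ _ ?_ ?_ ?_ ?_ ?_ ?_ ?_ ?_ ?_ ?_,
          card5 _ _ _ _ _ ?_ ?_ ?_ ?_ ?_ ?_ ?_ ?_ ?_ ?_, ?_⟩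
  · exact hne _ _ (by omega) (by omega) (by omega)
  · exact hne _ _ (by omega) (by omega) (by omega)
  · exact hne _ _ (by omega) (by omega) (by omega)
  · exact hne _ _ (by omega) (by omega) (by omega)
  · exact hne _ _ (by omega) (by omega) (by omega)
  · exact hne _ _ (by omega) (by omega) (by omega)
  · exact hne _ _ (by omega) (by omega) (by omega)
  · exact hne _ _ (by omega) (by omega) (by omega)
  · exact hne _ _ (by omega) (by omega) (by omega)
  · exact hne _ _ (by omega) (by omega) (by omega)
  · exact hne _ _ (by omega) (by omega) (by omega)
  · exact hne _ _ (by omega) (by omega) (by omega)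
  · exact hne _ _ (by omega) (by omega) (by omega)
  · exact hne _ _ (by omega) (by omega) (by omega)
  · exact hne _ _ (by omega) (by omega) (by omega)
  · exact hne _ _ (by omega) (by omega) (by omega)
  · exact hne _ _ (by omega) (by omega) (by omega)
  · exact hne _ _ (by omega) (by omega) (by omega)
  · exact hne _ _ (by omega) (by omega) (by omega)
  · exact hne _ _ (by omega) (by omega) (by omega)
  · unfold Homometric
    rw [distM _ _ _ _ _ _
          (hne _ _ (by omega) (by omega) (by omega)) (hne _ _ (by omega) (by omega) (by omega))
          (hne _ _ (by omega) (by omega) (by omega)) (hne _ _ (by omega) (by omega) (by omega))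
          (hne _ _ (by omega) (by omega) (by omega)) (hne _ _ (by omega) (by omega) (by omega))
          (hne _ _ (by omega) (by omega) (by omega)) (hne _ _ (by omega) (by omega) (by omega))
          (hne _ _ (by omega) (by omega) (by omega)) (hne _ _ (by omega) (by omega) (by omega)),
        distM _ _ _ _ _ _
          (hne _ _ (by omega) (by omega) (by omega)) (hne _ _ (by omega) (by omega) (by omega))
          (hne _ _ (by omega) (by omega) (by omega)) (hne _ _ (by omega) (by omega) (by omega))
          (hne _ _ (by omega) (by omega) (by omega)) (hne _ _ (by omega) (by omega) (by omega))
          (hne _ _ (by omega) (by omega) (by omega)) (hne _ _ (by omega) (by omega) (by omega))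
          (hne _ _ (by omega) (by omega) (by omega)) (hne _ _ (by omega) (by omega) (by omega))]
    -- rewrite T entries into S entries
    have t3 : cycDist (5*m) ((0:ℕ)) ((m+i : ℕ)) = cycDist (5*m) ((m:ℕ)) ((2*m+i : ℕ)) :=
      cycDist_congr (by push_cast; ring)
    have t4 : cycDist (5*m) ((0:ℕ)) ((3*m : ℕ)) = cycDist (5*m) ((0:ℕ)) ((2*m : ℕ)) :=
      cycDist_congr' (by push_cast; linear_combination -h5)
    have t6 : cycDist (5*m) ((i:ℕ)) ((m+i : ℕ)) = cycDist (5*m) ((m:ℕ)) ((2*m : ℕ)) :=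
      cycDist_congr (by push_cast; ring)
    have t7 : cycDist (5*m) ((i:ℕ)) ((3*m : ℕ)) = cycDist (5*m) ((0:ℕ)) ((2*m+i : ℕ)) :=
      cycDist_congr' (by push_cast; linear_combination -h5)
    have t8 : cycDist (5*m) ((m:ℕ)) ((m+i : ℕ)) = cycDist (5*m) ((2*m:ℕ)) ((2*m+i : ℕ)) :=
      cycDist_congr (by push_cast; ring)
    have t9 : cycDist (5*m) ((m:ℕ)) ((3*m : ℕ)) = cycDist (5*m) ((i:ℕ)) ((2*m+i : ℕ)) :=
      cycDist_congr (by push_cast; ring)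
    have t10 : cycDist (5*m) ((m+i:ℕ)) ((3*m : ℕ)) = cycDist (5*m) ((i:ℕ)) ((2*m : ℕ)) :=
      cycDist_congr (by push_cast; ring)
    rw [t3, t4, t6, t7, t8, t9, t10]
    exact (perm10 _ _ _ _ _ _ _ _ _ _).symm
end

section
/- Let n be a positive integer divisible by 13, and set m = n/13. Then the subsets S = {0, m, 4m, 6m} and T = {0, 2m, 3m, 7m} of Z_n are homometric 4-element subsets. -/
-- aux
lemma distMultiset_quad {n : ℕ} (a b c d : ZMod n)
    (hab : a ≠ b) (hac : a ≠ c) (had : a ≠ d) (hbc : b ≠ c) (hbd : b ≠ d) (hcd : c ≠ d) :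
    distMultiset n {a, b, c, d} =
      {cycDist n a b, cycDist n a c, cycDist n a d,
       cycDist n b c, cycDist n b d, cycDist n c d} := by
  have hval : ({a, b, c, d} : Finset (ZMod n)).val = (a ::ₘ b ::ₘ c ::ₘ d ::ₘ 0) := by
    simp [Finset.insert_val_of_notMem, hab, hac, had, hbc, hbd, hcd]
  unfold distMultiset
  rw [Finset.filter_val, Finset.sym2_val, hval]
  simp only [Multiset.sym2_cons, Multiset.sym2_zero, Multiset.map_cons, Multiset.map_zero,
    Multiset.filter_add, Multiset.filter_cons, Multiset.filter_zero, Sym2.isDiag_iff_proj_eq,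
    Multiset.map_add]
  simp [hab, hac, had, hbc, hbd, hcd, Multiset.filter_cons, Sym2.isDiag_iff_proj_eq,
    ← Multiset.singleton_add, add_assoc, add_left_comm, add_comm]

lemma val_cast_mul {m : ℕ} (hm : 1 ≤ m) {i : ℕ} (hi : i < 13) :
    ((i * m : ℕ) : ZMod (13 * m)).val = i * m :=
  ZMod.val_cast_of_lt (by exact Nat.mul_lt_mul_of_lt_of_le hi (le_refl m) (by omega))

lemma cast_mul_ne {m : ℕ} (hm : 1 ≤ m) {i j : ℕ} (hi : i < 13) (hj : j < 13) (hij : i ≠ j) :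
    ((i * m : ℕ) : ZMod (13 * m)) ≠ ((j * m : ℕ) : ZMod (13 * m)) := by
  intro h
  have := congrArg ZMod.val h
  rw [val_cast_mul hm hi, val_cast_mul hm hj] at this
  exact hij (Nat.eq_of_mul_eq_mul_right hm this)

lemma cycDist_cast_mul {m : ℕ} (hm : 1 ≤ m) {i j : ℕ} (hi : i < 13) (hji : j < i) :
    cycDist (13 * m) ((i * m : ℕ) : ZMod (13 * m)) ((j * m : ℕ) : ZMod (13 * m)) =
      min (i - j) (13 - (i - j)) * m := by
  have h1 : ((i * m : ℕ) : ZMod (13 * m)) - ((j * m : ℕ) : ZMod (13 * m))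
      = (((i - j) * m : ℕ) : ZMod (13 * m)) := by
    push_cast [Nat.sub_mul, Nat.cast_sub (Nat.mul_le_mul_right m hji.le)]
    ring
  have h2 : ((j * m : ℕ) : ZMod (13 * m)) - ((i * m : ℕ) : ZMod (13 * m))
      = (((13 - (i - j)) * m : ℕ) : ZMod (13 * m)) := by
    have : ((13 * m : ℕ) : ZMod (13 * m)) = 0 := by
      exact_mod_cast ZMod.natCast_self (13 * m)
    have e : (13 - (i - j)) * m + i * m = j * m + 13 * m := by
      have : (13 - (i - j)) + i = j + 13 := by omega
      calc (13 - (i - j)) * m + i * m = ((13 - (i - j)) + i) * m := by ring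
        _ = (j + 13) * m := by rw [this]
        _ = j * m + 13 * m := by ring
    have h0 : (13 : ZMod (13 * m)) * (m : ZMod (13 * m)) = 0 := by
      have := ZMod.natCast_self (13 * m); push_cast at this; exact this
    have hc := congrArg (fun k : ℕ => (k : ZMod (13 * m))) e
    push_cast at hc
    push_cast
    linear_combination -h0 - hc
  rw [cycDist, h1, h2, val_cast_mul hm (by omega), val_cast_mul hm (by omega)]
  rcases le_total (i - j) (13 - (i - j)) with h | h
  · rw [min_eq_left h, min_eq_left (Nat.mul_le_mul_right m h)]
  · rw [min_eq_right h, min_eq_right (Nat.mul_le_mul_right m h)]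

theorem main (m : ℕ) (hm : 1 ≤ m) :
    ({0, (m : ZMod (13 * m)), ((4 * m : ℕ) : ZMod (13 * m)),
        ((6 * m : ℕ) : ZMod (13 * m))} : Finset (ZMod (13 * m))).card = 4 ∧
    ({0, ((2 * m : ℕ) : ZMod (13 * m)), ((3 * m : ℕ) : ZMod (13 * m)),
        ((7 * m : ℕ) : ZMod (13 * m))} : Finset (ZMod (13 * m))).card = 4 := by
  have e0 : (0 : ZMod (13 * m)) = ((0 * m : ℕ) : ZMod (13 * m)) := by norm_num
  have e1 : (m : ZMod (13 * m)) = ((1 * m : ℕ) : ZMod (13 * m)) := by norm_num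
  rw [e0, e1]
  have ne : ∀ i j : ℕ, i < 13 → j < 13 → i ≠ j →
      ((i * m : ℕ) : ZMod (13 * m)) ≠ ((j * m : ℕ) : ZMod (13 * m)) :=
    fun i j hi hj hij => cast_mul_ne hm hi hj hij
  constructor
  · rw [Finset.card_insert_of_notMem, Finset.card_insert_of_notMem,
      Finset.card_insert_of_notMem, Finset.card_singleton]
    · simp only [Finset.mem_singleton]
      exact ne 4 6 (by norm_num) (by norm_num) (by norm_num)
    · simp only [Finset.mem_insert, Finset.mem_singleton, not_or]
      refine ⟨ne 1 4 (by norm_num) (by norm_num) (by norm_num), ne 1 6 (by norm_num) (by norm_num) (by norm_num)⟩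
    · simp only [Finset.mem_insert, Finset.mem_singleton, not_or]
      refine ⟨ne 0 1 (by norm_num) (by norm_num) (by norm_num), ne 0 4 (by norm_num) (by norm_num) (by norm_num), ne 0 6 (by norm_num) (by norm_num) (by norm_num)⟩
  · rw [Finset.card_insert_of_notMem, Finset.card_insert_of_notMem,
      Finset.card_insert_of_notMem, Finset.card_singleton]
    · simp only [Finset.mem_singleton]
      exact ne 3 7 (by norm_num) (by norm_num) (by norm_num)
    · simp only [Finset.mem_insert, Finset.mem_singleton, not_or]
      refine ⟨ne 2 3 (by norm_num) (by norm_num) (by norm_num), ne 2 7 (by norm_num) (by norm_num) (by norm_num)⟩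
    · simp only [Finset.mem_insert, Finset.mem_singleton, not_or]
      refine ⟨ne 0 2 (by norm_num) (by norm_num) (by norm_num), ne 0 3 (by norm_num) (by norm_num) (by norm_num), ne 0 7 (by norm_num) (by norm_num) (by norm_num)⟩

lemma cycDist_cast_mul' {m : ℕ} (hm : 1 ≤ m) {i j : ℕ} (hj : j < 13) (hij : i < j) :
    cycDist (13 * m) ((i * m : ℕ) : ZMod (13 * m)) ((j * m : ℕ) : ZMod (13 * m)) =
      min (j - i) (13 - (j - i)) * m := by
  rw [cycDist_comm]; exact cycDist_cast_mul hm hj hij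

theorem main2 (m : ℕ) (hm : 1 ≤ m) :
    distMultiset (13 * m)
      ({0, (m : ZMod (13 * m)), ((4 * m : ℕ) : ZMod (13 * m)),
        ((6 * m : ℕ) : ZMod (13 * m))} : Finset (ZMod (13 * m))) =
    distMultiset (13 * m)
      ({0, ((2 * m : ℕ) : ZMod (13 * m)), ((3 * m : ℕ) : ZMod (13 * m)),
        ((7 * m : ℕ) : ZMod (13 * m))} : Finset (ZMod (13 * m))) := by
  have e0 : (0 : ZMod (13 * m)) = ((0 * m : ℕ) : ZMod (13 * m)) := by norm_num
  have e1 : (m : ZMod (13 * m)) = ((1 * m : ℕ) : ZMod (13 * m)) := by norm_num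
  have ne : ∀ i j : ℕ, i < 13 → j < 13 → i ≠ j →
      ((i * m : ℕ) : ZMod (13 * m)) ≠ ((j * m : ℕ) : ZMod (13 * m)) :=
    fun i j hi hj hij => cast_mul_ne hm hi hj hij
  rw [e0, e1,
    distMultiset_quad _ _ _ _
      (ne 0 1 (by norm_num) (by norm_num) (by norm_num))
      (ne 0 4 (by norm_num) (by norm_num) (by norm_num))
      (ne 0 6 (by norm_num) (by norm_num) (by norm_num))
      (ne 1 4 (by norm_num) (by norm_num) (by norm_num))
      (ne 1 6 (by norm_num) (by norm_num) (by norm_num))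
      (ne 4 6 (by norm_num) (by norm_num) (by norm_num)),
    distMultiset_quad _ _ _ _
      (ne 0 2 (by norm_num) (by norm_num) (by norm_num))
      (ne 0 3 (by norm_num) (by norm_num) (by norm_num))
      (ne 0 7 (by norm_num) (by norm_num) (by norm_num))
      (ne 2 3 (by norm_num) (by norm_num) (by norm_num))
      (ne 2 7 (by norm_num) (by norm_num) (by norm_num))
      (ne 3 7 (by norm_num) (by norm_num) (by norm_num))]
  rw [cycDist_cast_mul' hm (by norm_num) (by norm_num),
    cycDist_cast_mul' hm (by norm_num) (by norm_num),
    cycDist_cast_mul' hm (by norm_num) (by norm_num),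
    cycDist_cast_mul' hm (by norm_num) (by norm_num),
    cycDist_cast_mul' hm (by norm_num) (by norm_num),
    cycDist_cast_mul' hm (by norm_num) (by norm_num),
    cycDist_cast_mul' hm (by norm_num) (by norm_num),
    cycDist_cast_mul' hm (by norm_num) (by norm_num),
    cycDist_cast_mul' hm (by norm_num) (by norm_num),
    cycDist_cast_mul' hm (by norm_num) (by norm_num),
    cycDist_cast_mul' hm (by norm_num) (by norm_num),
    cycDist_cast_mul' hm (by norm_num) (by norm_num)]
  norm_num
  simp [← Multiset.singleton_add, add_assoc, add_left_comm, add_comm]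


theorem rosenblatt_berman_second_family (m : ℕ) (hm : 1 ≤ m) :
    ({0, (m : ZMod (13 * m)), ((4 * m : ℕ) : ZMod (13 * m)),
        ((6 * m : ℕ) : ZMod (13 * m))} : Finset (ZMod (13 * m))).card = 4 ∧
    ({0, ((2 * m : ℕ) : ZMod (13 * m)), ((3 * m : ℕ) : ZMod (13 * m)),
        ((7 * m : ℕ) : ZMod (13 * m))} : Finset (ZMod (13 * m))).card = 4 ∧
    Homometric (13 * m)
      ({0, (m : ZMod (13 * m)), ((4 * m : ℕ) : ZMod (13 * m)),
        ((6 * m : ℕ) : ZMod (13 * m))} : Finset (ZMod (13 * m)))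
      ({0, ((2 * m : ℕ) : ZMod (13 * m)), ((3 * m : ℕ) : ZMod (13 * m)),
        ((7 * m : ℕ) : ZMod (13 * m))} : Finset (ZMod (13 * m))) := by
  exact ⟨(main m hm).1, (main m hm).2, main2 m hm⟩
end

section
/- Suppose x_1 < x_2 < x_3 < x_4 < x_5 are five real numbers in [0, 1/2]. Then the set {x_1,...,x_5} is determined up to translation and reflection of the real line by its multiset of pairwise absolute differences; that is, if y_1 < ... < y_5 in [0,1/2] have the same multiset of pairwise differences {|y_i - y_j| : i < j} = {|x_i - x_j| : i < j}, then either y_i = x_i + c for all i and some constant c, or y_i = c - x_{6-i} for all i and some constant c. -/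
private lemma mcancel {a : ℝ} {s t : Multiset ℝ} (h : a ::ₘ s = a ::ₘ t) : s = t :=
  (Multiset.cons_inj_right a).mp h

private lemma reord10 (u1 u2 u3 u4 u5 u6 u7 u8 u9 u10 : ℝ) :
    ({u1, u2, u3, u4, u5, u6, u7, u8, u9, u10} : Multiset ℝ)
      = {u4, u3, u7, u1, u10, u6, u5, u8, u2, u9} := by
  simp only [Multiset.insert_eq_cons, ← Multiset.singleton_add]; abel

lemma core2 (a1 a2 a3 a4 c2 c3 : ℝ) (h1 : 0 < a1) (h2 : 0 < a2) (h3 : 0 < a3) (h4 : 0 < a4)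
    (hc2 : 0 < c2) (hc3 : 0 < c3)
    (h5 : ((a2+a3) ::ₘ a2 ::ₘ a3 ::ₘ (a1+a2) ::ₘ {a3+a4} : Multiset ℝ)
        = (c2+c3) ::ₘ c2 ::ₘ c3 ::ₘ (a1+c2) ::ₘ {c3+a4}) :
    (a2 = c2 ∧ a3 = c3) ∨ (a1 = a4 ∧ a2 = c3 ∧ a3 = c2) := by
  have hsum := congrArg Multiset.sum h5
  simp only [Multiset.sum_cons, Multiset.sum_singleton] at hsum
  have h23 : a2 + a3 = c2 + c3 := by linarith
  rw [show c2 + c3 = a2 + a3 from h23.symm] at h5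
  have h4e := mcancel h5
  have hmem : a2 ∈ (c2 ::ₘ c3 ::ₘ (a1+c2) ::ₘ {c3+a4} : Multiset ℝ) := by
    rw [← h4e]; simp
  simp only [Multiset.mem_cons, Multiset.mem_singleton] at hmem
  rcases hmem with hA | hA | hA | hA
  · left; exact ⟨hA, by linarith⟩
  · -- a2 = c3
    have hc2' : c2 = a3 := by linarith
    have hc3' : c3 = a2 := hA.symm
    rw [hc2', hc3'] at h4e
    rw [Multiset.cons_swap a3 a2] at h4e
    have h2e := mcancel (mcancel h4e)
    have hm2 : a1+a2 ∈ ((a1+a3) ::ₘ {a2+a4} : Multiset ℝ) := by rw [← h2e]; simp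
    simp only [Multiset.mem_cons, Multiset.mem_singleton] at hm2
    rcases hm2 with hB | hB
    · left; constructor <;> linarith
    · right; refine ⟨by linarith, by linarith, by linarith⟩
  · -- a2 = a1 + c2
    have hc2' : c2 = a2 - a1 := by linarith
    have hc3' : c3 = a1 + a3 := by linarith
    rw [hc2', hc3'] at h4e
    rw [show a1 + (a2 - a1) = a2 from by ring] at h4e
    have hre : ((a2-a1) ::ₘ (a1+a3) ::ₘ a2 ::ₘ {a1+a3+a4} : Multiset ℝ)
        = a2 ::ₘ (a2-a1) ::ₘ (a1+a3) ::ₘ {a1+a3+a4} := by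
      simp only [← Multiset.singleton_add]; abel
    rw [hre] at h4e
    have h3e := mcancel h4e
    have hm3 : a3 ∈ ((a2-a1) ::ₘ (a1+a3) ::ₘ {a1+a3+a4} : Multiset ℝ) := by
      rw [← h3e]; simp
    simp only [Multiset.mem_cons, Multiset.mem_singleton] at hm3
    rcases hm3 with hB | hB | hB
    · -- a3 = a2 - a1
      rw [← hB] at h3e
      have h2e := mcancel h3e
      have hm2 : a1+a2 ∈ ((a1+a3) ::ₘ {a1+a3+a4} : Multiset ℝ) := by rw [← h2e]; simp
      simp only [Multiset.mem_cons, Multiset.mem_singleton] at hm2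
      rcases hm2 with hC | hC
      · exfalso; linarith
      · rw [show a1+a3+a4 = a1+a2 from hC.symm] at h2e
        have hre2 : ((a1+a3) ::ₘ {a1+a2} : Multiset ℝ) = (a1+a2) ::ₘ {a1+a3} := by
          simp only [← Multiset.singleton_add]; abel
        rw [hre2] at h2e
        have h1e := mcancel h2e
        have : a3 + a4 = a1 + a3 := Multiset.singleton_inj.mp h1e
        right; refine ⟨by linarith, by linarith, by linarith⟩
    · exfalso; linarith
    · exfalso; linarith
  · -- a2 = c3 + a4
    have hc3' : c3 = a2 - a4 := by linarith
    have hc2' : c2 = a3 + a4 := by linarith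
    rw [hc2', hc3'] at h4e
    rw [show a2 - a4 + a4 = a2 from by ring] at h4e
    have hre : ((a3+a4) ::ₘ (a2-a4) ::ₘ (a1+(a3+a4)) ::ₘ {a2} : Multiset ℝ)
        = a2 ::ₘ (a3+a4) ::ₘ (a2-a4) ::ₘ {a1+(a3+a4)} := by
      simp only [← Multiset.singleton_add]; abel
    rw [hre] at h4e
    have h3e := mcancel h4e
    have hm3 : a3 ∈ ((a3+a4) ::ₘ (a2-a4) ::ₘ {a1+(a3+a4)} : Multiset ℝ) := by
      rw [← h3e]; simp
    simp only [Multiset.mem_cons, Multiset.mem_singleton] at hm3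
    rcases hm3 with hB | hB | hB
    · exfalso; linarith
    · left; constructor <;> linarith
    · exfalso; linarith

lemma minle (a1 a2 a3 a4 b1 b2 b3 b4 : ℝ)
    (p1 : 0 < a1) (p2 : 0 < a2) (p3 : 0 < a3) (p4 : 0 < a4)
    (q1 : 0 < b1) (q2 : 0 < b2) (q3 : 0 < b3) (q4 : 0 < b4)
    (hM : ({a1+a2+a3+a4, a1+a2+a3, a2+a3+a4, a1, a4, a2+a3, a2, a3, a1+a2, a3+a4} : Multiset ℝ)
        = {b1+b2+b3+b4, b1+b2+b3, b2+b3+b4, b1, b4, b2+b3, b2, b3, b1+b2, b3+b4})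
    (hT : a1+a2+a3+a4 = b1+b2+b3+b4) : min a1 a4 ≤ min b1 b4 := by
  have l1 : min a1 a4 ≤ a1 := min_le_left _ _
  have l2 : min a1 a4 ≤ a4 := min_le_right _ _
  rcases le_total b1 b4 with hb | hb
  · rw [min_eq_left hb]
    have hm : b2+b3+b4 ∈ ({a1+a2+a3+a4, a1+a2+a3, a2+a3+a4, a1, a4, a2+a3, a2, a3, a1+a2, a3+a4} : Multiset ℝ) := by
      rw [hM]; simp
    simp only [Multiset.insert_eq_cons, Multiset.mem_cons, Multiset.mem_singleton] at hm
    rcases hm with h|h|h|h|h|h|h|h|h|h <;> linarith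
  · rw [min_eq_right hb]
    have hm : b1+b2+b3 ∈ ({a1+a2+a3+a4, a1+a2+a3, a2+a3+a4, a1, a4, a2+a3, a2, a3, a1+a2, a3+a4} : Multiset ℝ) := by
      rw [hM]; simp
    simp only [Multiset.insert_eq_cons, Multiset.mem_cons, Multiset.mem_singleton] at hm
    rcases hm with h|h|h|h|h|h|h|h|h|h <;> linarith

lemma key (a1 a2 a3 a4 b1 b2 b3 b4 : ℝ)
    (p1 : 0 < a1) (p2 : 0 < a2) (p3 : 0 < a3) (p4 : 0 < a4)
    (q1 : 0 < b1) (q2 : 0 < b2) (q3 : 0 < b3) (q4 : 0 < b4)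
    (hM : ({a1+a2+a3+a4, a1+a2+a3, a2+a3+a4, a1, a4, a2+a3, a2, a3, a1+a2, a3+a4} : Multiset ℝ)
        = {b1+b2+b3+b4, b1+b2+b3, b2+b3+b4, b1, b4, b2+b3, b2, b3, b1+b2, b3+b4}) :
    (a1 = b1 ∧ a2 = b2 ∧ a3 = b3 ∧ a4 = b4) ∨ (a1 = b4 ∧ a2 = b3 ∧ a3 = b2 ∧ a4 = b1) := by
  have hmb : b1+b2+b3+b4 ∈ ({a1+a2+a3+a4, a1+a2+a3, a2+a3+a4, a1, a4, a2+a3, a2, a3, a1+a2, a3+a4} : Multiset ℝ) := by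
    rw [hM]; simp
  have hma : a1+a2+a3+a4 ∈ ({b1+b2+b3+b4, b1+b2+b3, b2+b3+b4, b1, b4, b2+b3, b2, b3, b1+b2, b3+b4} : Multiset ℝ) := by
    rw [← hM]; simp
  simp only [Multiset.insert_eq_cons, Multiset.mem_cons, Multiset.mem_singleton] at hmb hma
  have hT : a1+a2+a3+a4 = b1+b2+b3+b4 := by
    have t1 : b1+b2+b3+b4 ≤ a1+a2+a3+a4 := by
      rcases hmb with h|h|h|h|h|h|h|h|h|h <;> linarith
    have t2 : a1+a2+a3+a4 ≤ b1+b2+b3+b4 := by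
      rcases hma with h|h|h|h|h|h|h|h|h|h <;> linarith
    linarith
  have hsum := congrArg Multiset.sum hM
  simp only [Multiset.insert_eq_cons, Multiset.sum_cons, Multiset.sum_singleton] at hsum
  have h23 : a2 + a3 = b2 + b3 := by linarith
  have h14 : a1 + a4 = b1 + b4 := by linarith
  have hmin : min a1 a4 = min b1 b4 :=
    le_antisymm (minle a1 a2 a3 a4 b1 b2 b3 b4 p1 p2 p3 p4 q1 q2 q3 q4 hM hT)
      (minle b1 b2 b3 b4 a1 a2 a3 a4 q1 q2 q3 q4 p1 p2 p3 p4 hM.symm hT.symm)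
  have hpair : (a1 = b1 ∧ a4 = b4) ∨ (a1 = b4 ∧ a4 = b1) := by
    rcases le_total a1 a4 with h | h <;> rcases le_total b1 b4 with h' | h'
    · rw [min_eq_left h, min_eq_left h'] at hmin; left; exact ⟨hmin, by linarith⟩
    · rw [min_eq_left h, min_eq_right h'] at hmin; right; exact ⟨by linarith, by linarith⟩
    · rw [min_eq_right h, min_eq_left h'] at hmin; right; exact ⟨by linarith, by linarith⟩
    · rw [min_eq_right h, min_eq_right h'] at hmin; left; exact ⟨by linarith, hmin⟩
  rcases hpair with ⟨e1, e4⟩ | ⟨e1, e4⟩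
  · -- case A : a1 = b1, a4 = b4
    rw [← e1, ← e4] at hM
    rw [show a1+b2+b3+a4 = a1+a2+a3+a4 from by linarith] at hM
    rw [show a1+b2+b3 = a1+a2+a3 from by linarith] at hM
    rw [show b2+b3+a4 = a2+a3+a4 from by linarith] at hM
    simp only [Multiset.insert_eq_cons] at hM
    have h5 := mcancel (mcancel (mcancel (mcancel (mcancel hM))))
    rcases core2 a1 a2 a3 a4 b2 b3 p1 p2 p3 p4 q2 q3 h5 with ⟨u, v⟩ | ⟨u, v, w⟩
    · left; exact ⟨e1, u, v, e4⟩
    · right; exact ⟨by linarith, v, w, by linarith⟩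
  · -- case B : a1 = b4, a4 = b1
    rw [← e1, ← e4] at hM
    rw [show a4+b2+b3+a1 = a1+a2+a3+a4 from by linarith] at hM
    rw [show a4+b2+b3 = a2+a3+a4 from by linarith] at hM
    rw [show b2+b3+a1 = a1+a2+a3 from by linarith] at hM
    rw [show b2+b3 = b3+b2 from add_comm _ _] at hM
    rw [show a4+b2 = b2+a4 from add_comm _ _] at hM
    rw [show b3+a1 = a1+b3 from add_comm _ _] at hM
    simp only [Multiset.insert_eq_cons] at hM
    have hre : ((a1+a2+a3+a4) ::ₘ (a2+a3+a4) ::ₘ (a1+a2+a3) ::ₘ a4 ::ₘ a1 ::ₘ (b3+b2) ::ₘ b2 ::ₘ b3 ::ₘ (b2+a4) ::ₘ {a1+b3} : Multiset ℝ)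
        = (a1+a2+a3+a4) ::ₘ (a1+a2+a3) ::ₘ (a2+a3+a4) ::ₘ a1 ::ₘ a4 ::ₘ (b3+b2) ::ₘ b3 ::ₘ b2 ::ₘ (a1+b3) ::ₘ {b2+a4} := by
      simp only [← Multiset.singleton_add]; abel
    rw [hre] at hM
    have h5 := mcancel (mcancel (mcancel (mcancel (mcancel hM))))
    rcases core2 a1 a2 a3 a4 b3 b2 p1 p2 p3 p4 q3 q2 h5 with ⟨u, v⟩ | ⟨u, v, w⟩
    · right; exact ⟨e1, u, v, e4⟩
    · left; exact ⟨by linarith, v, w, by linarith⟩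

theorem five_points_determined_by_differences (x y : Fin 5 → ℝ)
    (hx : StrictMono x) (hy : StrictMono y)
    (hxI : ∀ i, x i ∈ Set.Icc (0 : ℝ) (1 / 2))
    (hyI : ∀ i, y i ∈ Set.Icc (0 : ℝ) (1 / 2))
    (h : ((Finset.univ.filter (fun p : Fin 5 × Fin 5 => p.1 < p.2)).val.map
            (fun p => |x p.1 - x p.2|)) =
         ((Finset.univ.filter (fun p : Fin 5 × Fin 5 => p.1 < p.2)).val.map
            (fun p => |y p.1 - y p.2|))) :
    (∃ c : ℝ, ∀ i, y i = x i + c) ∨ (∃ c : ℝ, ∀ i, y i = c - x i.rev) := by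
  have hfil : ((Finset.univ.filter (fun p : Fin 5 × Fin 5 => p.1 < p.2)).val) =
      ({(0,1),(0,2),(0,3),(0,4),(1,2),(1,3),(1,4),(2,3),(2,4),(3,4)} : Multiset (Fin 5 × Fin 5)) := by
    decide
  rw [hfil] at h
  simp only [Multiset.insert_eq_cons, Multiset.map_cons, Multiset.map_singleton] at h
  have ax : ∀ i j : Fin 5, i < j → |x i - x j| = x j - x i := fun i j hij => by
    rw [abs_of_neg (sub_neg.mpr (hx hij)), neg_sub]
  have ay : ∀ i j : Fin 5, i < j → |y i - y j| = y j - y i := fun i j hij => by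
    rw [abs_of_neg (sub_neg.mpr (hy hij)), neg_sub]
  rw [ax 0 1 (by decide), ax 0 2 (by decide), ax 0 3 (by decide), ax 0 4 (by decide),
      ax 1 2 (by decide), ax 1 3 (by decide), ax 1 4 (by decide), ax 2 3 (by decide),
      ax 2 4 (by decide), ax 3 4 (by decide),
      ay 0 1 (by decide), ay 0 2 (by decide), ay 0 3 (by decide), ay 0 4 (by decide),
      ay 1 2 (by decide), ay 1 3 (by decide), ay 1 4 (by decide), ay 2 3 (by decide),
      ay 2 4 (by decide), ay 3 4 (by decide)] at h
  -- express differences as gap sums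
  rw [show x 2 - x 0 = (x 1 - x 0) + (x 2 - x 1) from by ring,
      show x 3 - x 0 = (x 1 - x 0) + (x 2 - x 1) + (x 3 - x 2) from by ring,
      show x 4 - x 0 = (x 1 - x 0) + (x 2 - x 1) + (x 3 - x 2) + (x 4 - x 3) from by ring,
      show x 3 - x 1 = (x 2 - x 1) + (x 3 - x 2) from by ring,
      show x 4 - x 1 = (x 2 - x 1) + (x 3 - x 2) + (x 4 - x 3) from by ring,
      show x 4 - x 2 = (x 3 - x 2) + (x 4 - x 3) from by ring,
      show y 2 - y 0 = (y 1 - y 0) + (y 2 - y 1) from by ring,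
      show y 3 - y 0 = (y 1 - y 0) + (y 2 - y 1) + (y 3 - y 2) from by ring,
      show y 4 - y 0 = (y 1 - y 0) + (y 2 - y 1) + (y 3 - y 2) + (y 4 - y 3) from by ring,
      show y 3 - y 1 = (y 2 - y 1) + (y 3 - y 2) from by ring,
      show y 4 - y 1 = (y 2 - y 1) + (y 3 - y 2) + (y 4 - y 3) from by ring,
      show y 4 - y 2 = (y 3 - y 2) + (y 4 - y 3) from by ring] at h
  set a1 := x 1 - x 0 with ha1
  set a2 := x 2 - x 1 with ha2
  set a3 := x 3 - x 2 with ha3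
  set a4 := x 4 - x 3 with ha4
  set b1 := y 1 - y 0 with hb1
  set b2 := y 2 - y 1 with hb2
  set b3 := y 3 - y 2 with hb3
  set b4 := y 4 - y 3 with hb4
  -- h : {a1, a1+a2, a1+a2+a3, a1+a2+a3+a4, a2, a2+a3, a2+a3+a4, a3, a3+a4, a4} = same with b
  have hM : ({a1+a2+a3+a4, a1+a2+a3, a2+a3+a4, a1, a4, a2+a3, a2, a3, a1+a2, a3+a4} : Multiset ℝ)
      = {b1+b2+b3+b4, b1+b2+b3, b2+b3+b4, b1, b4, b2+b3, b2, b3, b1+b2, b3+b4} := by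
    have r1 := reord10 a1 (a1+a2) (a1+a2+a3) (a1+a2+a3+a4) a2 (a2+a3) (a2+a3+a4) a3 (a3+a4) a4
    have r2 := reord10 b1 (b1+b2) (b1+b2+b3) (b1+b2+b3+b4) b2 (b2+b3) (b2+b3+b4) b3 (b3+b4) b4
    calc ({a1+a2+a3+a4, a1+a2+a3, a2+a3+a4, a1, a4, a2+a3, a2, a3, a1+a2, a3+a4} : Multiset ℝ)
        = {a1, a1+a2, a1+a2+a3, a1+a2+a3+a4, a2, a2+a3, a2+a3+a4, a3, a3+a4, a4} := r1.symm
      _ = {b1, b1+b2, b1+b2+b3, b1+b2+b3+b4, b2, b2+b3, b2+b3+b4, b3, b3+b4, b4} := by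
            simpa using h
      _ = _ := r2
  have hx01 : x 0 < x 1 := hx (by decide)
  have hx12 : x 1 < x 2 := hx (by decide)
  have hx23 : x 2 < x 3 := hx (by decide)
  have hx34 : x 3 < x 4 := hx (by decide)
  have hy01 : y 0 < y 1 := hy (by decide)
  have hy12 : y 1 < y 2 := hy (by decide)
  have hy23 : y 2 < y 3 := hy (by decide)
  have hy34 : y 3 < y 4 := hy (by decide)
  have p1 : 0 < a1 := by rw [ha1]; linarith
  have p2 : 0 < a2 := by rw [ha2]; linarith
  have p3 : 0 < a3 := by rw [ha3]; linarith
  have p4 : 0 < a4 := by rw [ha4]; linarith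
  have q1 : 0 < b1 := by rw [hb1]; linarith
  have q2 : 0 < b2 := by rw [hb2]; linarith
  have q3 : 0 < b3 := by rw [hb3]; linarith
  have q4 : 0 < b4 := by rw [hb4]; linarith
  rcases key a1 a2 a3 a4 b1 b2 b3 b4 p1 p2 p3 p4 q1 q2 q3 q4 hM with
    ⟨u1, u2, u3, u4⟩ | ⟨u1, u2, u3, u4⟩
  · left
    refine ⟨y 0 - x 0, fun i => ?_⟩
    fin_cases i
    · show y 0 = x 0 + (y 0 - x 0); ring
    · show y 1 = x 1 + (y 0 - x 0)
      rw [ha1, hb1] at u1; linarith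
    · show y 2 = x 2 + (y 0 - x 0)
      rw [ha1, hb1] at u1; rw [ha2, hb2] at u2; linarith
    · show y 3 = x 3 + (y 0 - x 0)
      rw [ha1, hb1] at u1; rw [ha2, hb2] at u2; rw [ha3, hb3] at u3; linarith
    · show y 4 = x 4 + (y 0 - x 0)
      rw [ha1, hb1] at u1; rw [ha2, hb2] at u2; rw [ha3, hb3] at u3; rw [ha4, hb4] at u4
      linarith
  · right
    refine ⟨y 0 + x 4, fun i => ?_⟩
    rw [ha1, hb4] at u1; rw [ha2, hb3] at u2; rw [ha3, hb2] at u3; rw [ha4, hb1] at u4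
    fin_cases i
    · show y 0 = y 0 + x 4 - x 4; ring
    · show y 1 = y 0 + x 4 - x 3; linarith
    · show y 2 = y 0 + x 4 - x 2; linarith
    · show y 3 = y 0 + x 4 - x 1; linarith
    · show y 4 = y 0 + x 4 - x 0; linarith
end
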